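/- Let ū = (α, u) : Σ → ℝ × M be a pseudo-holomorphic map and φ : ℝ → [0,1] a smooth nondecreasing function. Then the pullback of the 2-form ω_φ := d(φ(α)λ) under ū is pointwise nonnegative: ū^*ω_φ = (1/2)[φ'(α)(α_τ² + α_t² + λ(u_τ)² + λ(u_t)²) + φ(α)(g_M(π_ξ u_τ, π_ξ u_τ) + g_M(π_ξ u_t, π_ξ u_t))] dτ∧dt ≥ 0. -/
import Mathlib


/-- Projection onto the contact distribution `ξ = ker λ` along the Reeb field. -/
noncomputable def piXi {V : Type*} [NormedAddCommGroup V] [NormedSpace ℝ V]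
    (lam : V → V →L[ℝ] ℝ) (X : V → V) (p v : V) : V :=
  v - lam p v • X p

/-- The exterior differential `dλ` of the 1-form `lam`. -/
noncomputable def dlam {V : Type*} [NormedAddCommGroup V] [NormedSpace ℝ V]
    (lam : V → V →L[ℝ] ℝ) (p v w : V) : ℝ :=
  fderiv ℝ lam p v w - fderiv ℝ lam p w v

/-- The metric `g_M(h,k) = λ(h)λ(k) + dλ(π_ξ h, I π_ξ k)`. -/
noncomputable def gMet {V : Type*} [NormedAddCommGroup V] [NormedSpace ℝ V]
    (lam : V → V →L[ℝ] ℝ) (X : V → V) (I : V → V →L[ℝ] V) (p h k : V) : ℝ :=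
  lam p h * lam p k + dlam lam p (piXi lam X p h) (I p (piXi lam X p k))


section Aux
variable {V : Type*} [NormedAddCommGroup V] [NormedSpace ℝ V]
  (lam : V → V →L[ℝ] ℝ) (X : V → V)

lemma lam_piXi (hX1 : ∀ p, lam p (X p) = 1) (p v : V) :
    lam p (piXi lam X p v) = 0 := by
  simp [piXi, hX1]

lemma piXi_idem (hX1 : ∀ p, lam p (X p) = 1) (p v : V) :
    piXi lam X p (piXi lam X p v) = piXi lam X p v := by
  rw [piXi, lam_piXi lam X hX1]; simp

lemma dlam_antisymm (p v w : V) : dlam lam p v w = - dlam lam p w v := by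
  simp [dlam]

lemma dlam_neg_left (p v w : V) : dlam lam p (-v) w = - dlam lam p v w := by
  simp [dlam]; ring

lemma dlam_sub_smul_left (p : V) (v w x : V) (c : ℝ) :
    dlam lam p (v - c • x) w = dlam lam p v w - c * dlam lam p x w := by
  simp [dlam, map_sub, map_smul]; ring

lemma dlam_sub_smul_right (p : V) (v w x : V) (c : ℝ) :
    dlam lam p v (w - c • x) = dlam lam p v w - c * dlam lam p v x := by
  simp [dlam, map_sub, map_smul]; ring

lemma dlam_piXi (hX2 : ∀ p v, dlam lam p (X p) v = 0) (p v w : V) :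
    dlam lam p v w = dlam lam p (piXi lam X p v) (piXi lam X p w) := by
  have h2 : ∀ v, dlam lam p v (X p) = 0 := fun v => by
    rw [dlam_antisymm, hX2]; ring
  rw [piXi, piXi, dlam_sub_smul_left, dlam_sub_smul_right, dlam_sub_smul_right,
    hX2, h2, h2]
  ring
end Aux

/-- For a pseudo-holomorphic map `ū = (a, u)` and a smooth nondecreasing
`φ : ℝ → [0,1]`, the pullback `ū^*ω_φ(∂τ,∂t)` equals the stated nonnegative
expression; in particular it is pointwise nonnegative. -/
theorem stmt_11 {V : Type*} [NormedAddCommGroup V] [NormedSpace ℝ V]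
    (lam : V → V →L[ℝ] ℝ) (hlam : ContDiff ℝ (⊤ : ℕ∞) lam)
    (X : V → V) (hX1 : ∀ p, lam p (X p) = 1)
    (hX2 : ∀ p v, dlam lam p (X p) v = 0)
    (I : V → V →L[ℝ] V)
    (hI1 : ∀ p v, I p (I p (piXi lam X p v)) = -(piXi lam X p v))
    (hI2 : ∀ p v, lam p (I p (piXi lam X p v)) = 0)
    (hpos : ∀ p v, 0 ≤ dlam lam p (piXi lam X p v) (I p (piXi lam X p v)))
    (a : ℝ × ℝ → ℝ) (u : ℝ × ℝ → V)
    (ha : Differentiable ℝ a) (hu : Differentiable ℝ u)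
    (hPH1 : ∀ z, piXi lam X (u z) (fderiv ℝ u z (1, 0))
        + I (u z) (piXi lam X (u z) (fderiv ℝ u z (0, 1))) = 0)
    (hPH2 : ∀ z, lam (u z) (fderiv ℝ u z (0, 1)) = fderiv ℝ a z (1, 0))
    (hPH3 : ∀ z, lam (u z) (fderiv ℝ u z (1, 0)) = -fderiv ℝ a z (0, 1))
    (φ : ℝ → ℝ) (hφ : ContDiff ℝ (⊤ : ℕ∞) φ)
    (hφ0 : ∀ s, 0 ≤ φ s) (hφ1 : ∀ s, φ s ≤ 1) (hφ' : ∀ s, 0 ≤ deriv φ s) :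
    ∀ z : ℝ × ℝ,
      (deriv φ (a z) * (fderiv ℝ a z (1, 0) * lam (u z) (fderiv ℝ u z (0, 1))
            - fderiv ℝ a z (0, 1) * lam (u z) (fderiv ℝ u z (1, 0)))
          + φ (a z) * dlam lam (u z) (fderiv ℝ u z (1, 0)) (fderiv ℝ u z (0, 1))
        = (1 / 2) *
            (deriv φ (a z) * ((fderiv ℝ a z (1, 0)) ^ 2 + (fderiv ℝ a z (0, 1)) ^ 2
                + (lam (u z) (fderiv ℝ u z (1, 0))) ^ 2
                + (lam (u z) (fderiv ℝ u z (0, 1))) ^ 2)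
              + φ (a z) *
                (gMet lam X I (u z) (piXi lam X (u z) (fderiv ℝ u z (1, 0)))
                  (piXi lam X (u z) (fderiv ℝ u z (1, 0)))
                + gMet lam X I (u z) (piXi lam X (u z) (fderiv ℝ u z (0, 1)))
                  (piXi lam X (u z) (fderiv ℝ u z (0, 1)))))) ∧
      0 ≤ deriv φ (a z) * (fderiv ℝ a z (1, 0) * lam (u z) (fderiv ℝ u z (0, 1))
            - fderiv ℝ a z (0, 1) * lam (u z) (fderiv ℝ u z (1, 0)))
          + φ (a z) * dlam lam (u z) (fderiv ℝ u z (1, 0)) (fderiv ℝ u z (0, 1)) := by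
  intro z
  set p := u z with hp
  set vτ := fderiv ℝ u z (1, 0) with hvτ
  set vt := fderiv ℝ u z (0, 1) with hvt
  have h2 := hPH2 z
  have h3 := hPH3 z
  have hph : piXi lam X p vτ = -(I p (piXi lam X p vt)) :=
    eq_neg_of_add_eq_zero_left (hPH1 z)
  have hIvτ : I p (piXi lam X p vτ) = piXi lam X p vt := by
    rw [hph, map_neg, hI1]; simp
  have hD : dlam lam p vτ vt
      = dlam lam p (piXi lam X p vt) (I p (piXi lam X p vt)) := by
    rw [dlam_piXi lam X hX2, hph, dlam_neg_left,
      dlam_antisymm lam p (I p (piXi lam X p vt))]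
    ring
  have hgτ : gMet lam X I p (piXi lam X p vτ) (piXi lam X p vτ)
      = dlam lam p vτ vt := by
    rw [gMet, lam_piXi lam X hX1, piXi_idem lam X hX1, hIvτ, hph, dlam_neg_left,
      dlam_antisymm lam p (I p (piXi lam X p vt)), hD]
    ring
  have hgt : gMet lam X I p (piXi lam X p vt) (piXi lam X p vt)
      = dlam lam p vτ vt := by
    rw [gMet, lam_piXi lam X hX1, piXi_idem lam X hX1, hD]
    ring
  have hDpos : 0 ≤ dlam lam p vτ vt := hD ▸ hpos p vt
  constructor
  · rw [hgτ, hgt, h2, h3]; ring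
  · rw [h2, h3]
    have h1 := hφ' (a z)
    have h0 := hφ0 (a z)
    nlinarith [sq_nonneg (fderiv ℝ a z (1,0)), sq_nonneg (fderiv ℝ a z (0,1)),
      mul_nonneg h0 hDpos]
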